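/- arXiv:1301.6428 — 3 statements merged into one kernel-verified Lean document; each statement's English description precedes it below -/
import Mathlib

section
/- Correctness of the marked-ancestor encoding: let T be a rooted ordered tree with a subset M of marked nodes, encoded in DFS order as balanced parentheses B (over all nodes) and D (over marked nodes only, in the same DFS order). For any unmarked node x, let y be the rightmost marked parenthesis position in B at or before open(x). Then: (i) if no such y exists, x has no marked proper ancestor; (ii) if y is an open parenthesis, the node of y is the lowest marked ancestor of x; (iii) if y is a close parenthesis, the lowest marked ancestor of x is the marked node whose pair in D most tightly encloses the pair in D corresponding to y (and x has no marked ancestor if no enclosing pair exists in D). -/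
/-! The parenthesis pairs of a tree are laminar: `u` is an ancestor of `v` iff `open v` lies in
`[open u, close u]`, and a proper ancestor's pair strictly encloses the descendant's. So every
marked proper ancestor `u` of `x` satisfies `open u ≤ open x < close u`; in particular
`open u ≤ y`, while `close u`, being marked, cannot lie in `(y, open x]`.
If `y = open u`, this forces `open x ≤ close u`, so `u` encloses `x`, and every other marked
ancestor of `x` opens before `u` and closes after `open x`, hence encloses `u`.
If `y = close v`, then a marked ancestor of `x` opens before `close v` and closes after
`open x > close v`, so it encloses `v`; conversely a marked proper ancestor of `v` closes after
`close v`, hence after `open x`, and so encloses `x`. -/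

/-- Finite rooted ordered trees. -/
inductive RTree where
  | node : List RTree → RTree

/-- Balanced-parentheses encoding via DFS: `true` = '(' on entering a node,
`false` = ')' on leaving it. -/
def RTree.enc : RTree → List Bool
  | .node ts => true :: (ts.attach.map (fun c => RTree.enc c.1)).flatten ++ [false]
decreasing_by
  simp only [RTree.node.sizeOf_spec]
  have := List.sizeOf_lt_of_mem c.2
  omega

/-- The subtree at a path of child indices (if it exists). -/
def RTree.subtreeAt : RTree → List ℕ → Option RTree
  | t, [] => some t
  | .node ts, i :: p =>
    match ts[i]? with
    | some c => RTree.subtreeAt c p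
    | none => none

/-- The path `p` identifies a node of the tree `t`. -/
def RTree.Valid (t : RTree) (p : List ℕ) : Prop := (t.subtreeAt p).isSome

/-- Position of the opening parenthesis of the node at path `p` in `t.enc`. -/
def RTree.openPos : RTree → List ℕ → Option ℕ
  | _, [] => some 0
  | .node ts, i :: p =>
    (ts[i]?).bind fun c =>
      (RTree.openPos c p).map fun k =>
        1 + (((ts.take i).map (fun s => s.enc.length)).sum) + k

/-- Position of the closing parenthesis of the node at path `p` in `t.enc`. -/
def RTree.closePos (t : RTree) (p : List ℕ) : Option ℕ :=
  (t.openPos p).bind fun o => (t.subtreeAt p).map fun s => o + s.enc.length - 1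

/-- A sequence of parentheses (`true` = '(', `false` = ')') is balanced:
every prefix has at least as many '(' as ')' and the total counts are equal. -/
def BalancedBP (l : List Bool) : Prop :=
  (∀ pre : List Bool, pre <+: l → pre.count false ≤ pre.count true) ∧
    l.count true = l.count false

/-- `u` is a (proper) ancestor of `v`: the path `u` is a proper prefix of the path `v`. -/
def StrictAnc (u v : List ℕ) : Prop := u <+: v ∧ u ≠ v

/-- `i` is a parenthesis position (in `t.enc`) belonging to a marked node. -/
def MarkedPos (t : RTree) (Marked : List ℕ → Prop) (i : ℕ) : Prop :=
  ∃ p : List ℕ, t.Valid p ∧ Marked p ∧ (t.openPos p = some i ∨ t.closePos p = some i)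

namespace RTree

variable {t : RTree} {p u v : List ℕ}

theorem enc_node (ts : List RTree) :
    (node ts).enc = true :: (ts.map enc).flatten ++ [false] := by
  rw [enc, List.attach_map_val (f := enc)]

theorem length_enc_node (ts : List RTree) :
    (node ts).enc.length = (ts.map fun s => s.enc.length).sum + 2 := by
  simp [enc_node, List.length_flatten, Function.comp_def]

theorem two_le_length_enc (t : RTree) : 2 ≤ t.enc.length := by
  obtain ⟨ts⟩ := t
  rw [length_enc_node]
  omega

theorem head?_enc (t : RTree) : t.enc.head? = some true := by
  obtain ⟨ts⟩ := t
  simp [enc_node]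

theorem getLast?_enc (t : RTree) : t.enc.getLast? = some false := by
  obtain ⟨ts⟩ := t
  rw [enc_node, List.getLast?_concat]

def childOffset (ts : List RTree) (i : ℕ) : ℕ :=
  1 + ((ts.take i).map fun s => s.enc.length).sum

theorem childOffset_succ {ts : List RTree} {i : ℕ} {c : RTree} (hc : ts[i]? = some c) :
    childOffset ts (i + 1) = childOffset ts i + c.enc.length := by
  simp [childOffset, List.take_add_one, hc, Nat.add_assoc]

theorem childOffset_mono (ts : List RTree) : Monotone (childOffset ts) := by
  intro i j hij
  simp only [childOffset]
  gcongr 1 + ?_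
  exact ((List.take_sublist_take_left hij).map _).sum_le_sum fun _ _ => Nat.zero_le _

theorem childOffset_lt_length_enc (ts : List RTree) (i : ℕ) :
    childOffset ts i < (node ts).enc.length := by
  have := ((List.take_sublist i ts).map fun s => s.enc.length).sum_le_sum fun _ _ => Nat.zero_le _
  rw [childOffset, length_enc_node]
  omega

theorem childOffset_add_le_of_lt {ts : List RTree} {i j : ℕ} {c : RTree} (hc : ts[i]? = some c)
    (hij : i < j) : childOffset ts i + c.enc.length ≤ childOffset ts j :=
  childOffset_succ hc ▸ childOffset_mono ts hij

theorem enc_prefix_drop_childOffset {ts : List RTree} {i : ℕ} {c : RTree}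
    (hc : ts[i]? = some c) : c.enc <+: (node ts).enc.drop (childOffset ts i) := by
  obtain ⟨hi, rfl⟩ := List.getElem?_eq_some_iff.1 hc
  have hsplit : (node ts).enc = (true :: ((ts.take i).map enc).flatten) ++
      (ts[i].enc ++ (((ts.drop (i + 1)).map enc).flatten ++ [false])) := by
    conv_lhs => rw [enc_node, ← List.take_append_drop i ts, List.drop_eq_getElem_cons hi]
    simp only [List.map_append, List.map_cons, List.flatten_append, List.flatten_cons,
      List.cons_append, List.append_assoc]
  have hlen : (true :: ((ts.take i).map enc).flatten).length = childOffset ts i := by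
    simp [childOffset, List.length_flatten, Function.comp_def, Nat.add_comm]
  rw [hsplit, ← hlen, List.drop_left]
  exact List.prefix_append _ _

theorem subtreeAt_cons {ts : List RTree} {i : ℕ} (p : List ℕ) {c : RTree}
    (hc : ts[i]? = some c) : (node ts).subtreeAt (i :: p) = c.subtreeAt p := by
  simp [subtreeAt, hc]

theorem openPos_cons {ts : List RTree} {i : ℕ} (p : List ℕ) {c : RTree}
    (hc : ts[i]? = some c) :
    (node ts).openPos (i :: p) = (c.openPos p).map (childOffset ts i + ·) := by
  simp [openPos, hc, childOffset]

theorem isSome_openPos : ∀ (t : RTree) (p : List ℕ),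
    (t.openPos p).isSome = (t.subtreeAt p).isSome
  | _, [] => by cases ‹RTree›; rfl
  | .node ts, i :: p => by
    cases hc : ts[i]? with
    | none => simp [openPos, subtreeAt, hc]
    | some c => rw [openPos_cons p hc, subtreeAt_cons p hc, Option.isSome_map, isSome_openPos]

theorem Valid.exists_openPos (h : t.Valid p) :
    ∃ o, t.openPos p = some o :=
  Option.isSome_iff_exists.1 ((isSome_openPos t p).trans h)

theorem exists_subtreeAt_of_openPos {o : ℕ} (ho : t.openPos p = some o) :
    ∃ s, t.subtreeAt p = some s :=
  Option.isSome_iff_exists.1 ((isSome_openPos t p).symm.trans (by rw [ho]; rfl))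

theorem enc_prefix_drop_openPos : ∀ {t : RTree} {p : List ℕ} {o : ℕ} {s : RTree},
    t.openPos p = some o → t.subtreeAt p = some s → s.enc <+: t.enc.drop o
  | t, [], o, s, ho, hs => by
    cases t
    obtain rfl : 0 = o := Option.some_injective _ ho
    obtain rfl : _ = s := Option.some_injective _ hs
    exact List.prefix_refl _
  | .node ts, i :: p, o, s, ho, hs => by
    cases hc : ts[i]? with
    | none => simp [subtreeAt, hc] at hs
    | some c =>
      rw [openPos_cons p hc] at ho
      rw [subtreeAt_cons p hc] at hs
      obtain ⟨k, hk, rfl⟩ := Option.map_eq_some_iff.1 ho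
      rw [← List.drop_drop]
      exact (enc_prefix_drop_openPos hk hs).trans ((enc_prefix_drop_childOffset hc).drop k)

theorem openPos_add_length_le {o : ℕ} {s : RTree}
    (ho : t.openPos p = some o) (hs : t.subtreeAt p = some s) :
    o + s.enc.length ≤ t.enc.length := by
  have := (enc_prefix_drop_openPos ho hs).length_le
  rw [List.length_drop] at this
  have := s.two_le_length_enc
  omega

theorem getElem?_enc_openPos {o : ℕ} (ho : t.openPos p = some o) :
    t.enc[o]? = some true := by
  obtain ⟨s, hs⟩ := exists_subtreeAt_of_openPos ho
  obtain ⟨r, hr⟩ := enc_prefix_drop_openPos ho hs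
  rw [← List.head?_drop, ← hr, List.head?_append, head?_enc]
  rfl

theorem closePos_eq {o : ℕ} {s : RTree}
    (ho : t.openPos p = some o) (hs : t.subtreeAt p = some s) :
    t.closePos p = some (o + s.enc.length - 1) := by
  simp [closePos, ho, hs]

theorem exists_of_closePos_eq_some {c : ℕ} (hc : t.closePos p = some c) :
    ∃ o s, t.openPos p = some o ∧ t.subtreeAt p = some s ∧ c = o + s.enc.length - 1 := by
  simp only [closePos, Option.bind_eq_some_iff, Option.map_eq_some_iff] at hc
  obtain ⟨o, ho, s, hs, rfl⟩ := hc
  exact ⟨o, s, ho, hs, rfl⟩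

theorem getElem?_enc_closePos {c : ℕ} (hc : t.closePos p = some c) :
    t.enc[c]? = some false := by
  obtain ⟨o, s, ho, hs, rfl⟩ := exists_of_closePos_eq_some hc
  obtain ⟨r, hr⟩ := enc_prefix_drop_openPos ho hs
  have := s.two_le_length_enc
  rw [show o + s.enc.length - 1 = o + (s.enc.length - 1) by omega, ← List.getElem?_drop, ← hr,
    List.getElem?_append_left (by omega), ← List.getLast?_eq_getElem?, getLast?_enc]

theorem subtreeAt_append : ∀ (t : RTree) (u w : List ℕ),
    t.subtreeAt (u ++ w) = (t.subtreeAt u).bind (·.subtreeAt w)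
  | t, [], w => by cases t; rfl
  | .node ts, i :: u, w => by
    cases hc : ts[i]? with
    | none => simp [subtreeAt, hc]
    | some c =>
      rw [List.cons_append, subtreeAt_cons _ hc, subtreeAt_cons _ hc, subtreeAt_append c u w]

theorem openPos_append : ∀ {t : RTree} {u : List ℕ} (w : List ℕ) {o : ℕ} {s : RTree},
    t.openPos u = some o → t.subtreeAt u = some s →
      t.openPos (u ++ w) = (s.openPos w).map (o + ·)
  | t, [], w, o, s, ho, hs => by
    cases t
    obtain rfl : 0 = o := Option.some_injective _ ho
    obtain rfl : _ = s := Option.some_injective _ hs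
    simp
  | .node ts, i :: u, w, o, s, ho, hs => by
    cases hc : ts[i]? with
    | none => simp [subtreeAt, hc] at hs
    | some c =>
      rw [openPos_cons u hc] at ho
      rw [subtreeAt_cons u hc] at hs
      obtain ⟨k, hk, rfl⟩ := Option.map_eq_some_iff.1 ho
      rw [List.cons_append, openPos_cons _ hc, openPos_append w hk hs, Option.map_map]
      simp [Function.comp_def, Nat.add_assoc]

theorem openPos_cons_bounds {i : ℕ} {k : ℕ} {s : RTree}
    (hk : t.openPos (i :: p) = some k) (hs : t.subtreeAt (i :: p) = some s) :
    0 < k ∧ k + s.enc.length < t.enc.length := by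
  obtain ⟨ts⟩ := t
  cases hc : ts[i]? with
  | none => simp [subtreeAt, hc] at hs
  | some c =>
    rw [openPos_cons p hc] at hk
    rw [subtreeAt_cons p hc] at hs
    obtain ⟨k', hk', rfl⟩ := Option.map_eq_some_iff.1 hk
    have hsc := (enc_prefix_drop_openPos hk' hs).length_le
    have hct := childOffset_lt_length_enc ts (i + 1)
    have := s.two_le_length_enc
    rw [List.length_drop, childOffset_succ hc] at *
    unfold childOffset at *
    omega

theorem openPos_lt_of_strictAnc (huv : StrictAnc u v)
    {ou ov : ℕ} {su sv : RTree} (hou : t.openPos u = some ou) (hsu : t.subtreeAt u = some su)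
    (hov : t.openPos v = some ov) (hsv : t.subtreeAt v = some sv) :
    ou < ov ∧ ov + sv.enc.length < ou + su.enc.length := by
  obtain ⟨⟨_ | ⟨j, w⟩, rfl⟩, hne⟩ := huv
  · simp at hne
  rw [subtreeAt_append, hsu] at hsv
  rw [openPos_append _ hou hsu] at hov
  obtain ⟨k, hk, rfl⟩ := Option.map_eq_some_iff.1 hov
  have := openPos_cons_bounds hk hsv
  omega

theorem prefix_of_openPos_mem : ∀ {t : RTree} {u v : List ℕ} {ou ov : ℕ} {su : RTree},
    t.openPos u = some ou → t.subtreeAt u = some su → t.openPos v = some ov →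
      ou ≤ ov → ov < ou + su.enc.length → u <+: v
  | _, [], _, _, _, _, _, _, _, _, _ => List.nil_prefix
  | .node ts, i :: u, v, ou, ov, su, hou, hsu, hov, hle, hlt => by
    cases hc : ts[i]? with
    | none => simp [subtreeAt, hc] at hsu
    | some c =>
      rw [openPos_cons u hc] at hou
      rw [subtreeAt_cons u hc] at hsu
      obtain ⟨ku, hku, rfl⟩ := Option.map_eq_some_iff.1 hou
      have hsuc := openPos_add_length_le hku hsu
      obtain _ | ⟨j, v⟩ := v
      · obtain rfl : 0 = ov := Option.some_injective _ hov
        unfold childOffset at hle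
        omega
      cases hd : ts[j]? with
      | none => simp [openPos, hd] at hov
      | some d =>
        rw [openPos_cons v hd] at hov
        obtain ⟨kv, hkv, rfl⟩ := Option.map_eq_some_iff.1 hov
        obtain ⟨sv, hsv⟩ := exists_subtreeAt_of_openPos hkv
        have hsvd := openPos_add_length_le hkv hsv
        have := sv.two_le_length_enc
        obtain rfl : j = i := by
          rcases lt_trichotomy j i with hji | rfl | hij
          · have := childOffset_add_le_of_lt hd hji
            omega
          · rfl
          · have := childOffset_add_le_of_lt hc hij
            omega
        obtain rfl : d = c := Option.some_injective _ (hd.symm.trans hc)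
        exact List.cons_prefix_cons.2 ⟨rfl, prefix_of_openPos_mem hku hsu hkv (by omega) (by omega)⟩

theorem exists_closePos_of_openPos {o : ℕ} (ho : t.openPos p = some o) :
    ∃ c, t.closePos p = some c ∧ o < c := by
  obtain ⟨s, hs⟩ := exists_subtreeAt_of_openPos ho
  have := s.two_le_length_enc
  exact ⟨_, closePos_eq ho hs, by omega⟩

theorem exists_openPos_of_closePos {c : ℕ} (hc : t.closePos p = some c) :
    ∃ o, t.openPos p = some o ∧ o < c := by
  obtain ⟨o, s, ho, hs, rfl⟩ := exists_of_closePos_eq_some hc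
  have := s.two_le_length_enc
  exact ⟨o, ho, by omega⟩

theorem Valid.exists_openPos_closePos (h : t.Valid p) :
    ∃ o c, t.openPos p = some o ∧ t.closePos p = some c ∧ o < c := by
  obtain ⟨o, ho⟩ := h.exists_openPos
  obtain ⟨c, hc, hoc⟩ := exists_closePos_of_openPos ho
  exact ⟨o, c, ho, hc, hoc⟩

theorem closePos_ne_of_openPos_eq {i : ℕ} (hu : t.openPos u = some i) :
    t.closePos v ≠ some i := fun hv => by
  simpa using (getElem?_enc_openPos hu).symm.trans (getElem?_enc_closePos hv)

theorem prefix_iff_openPos_mem {ou cu ov : ℕ}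
    (hou : t.openPos u = some ou) (hcu : t.closePos u = some cu) (hov : t.openPos v = some ov) :
    u <+: v ↔ ou ≤ ov ∧ ov ≤ cu := by
  obtain ⟨ou', su, hou', hsu, rfl⟩ := exists_of_closePos_eq_some hcu
  obtain rfl : ou' = ou := Option.some_injective _ (hou'.symm.trans hou)
  have := su.two_le_length_enc
  refine ⟨fun huv => ?_, fun ⟨hle, hlt⟩ => prefix_of_openPos_mem hou hsu hov hle (by omega)⟩
  by_cases heq : u = v
  · subst heq
    obtain rfl := Option.some_injective _ (hou.symm.trans hov)
    omega
  · obtain ⟨sv, hsv⟩ := exists_subtreeAt_of_openPos hov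
    have := openPos_lt_of_strictAnc ⟨huv, heq⟩ hou hsu hov hsv
    omega

theorem closePos_lt_of_strictAnc (huv : StrictAnc u v) {cu cv : ℕ}
    (hcu : t.closePos u = some cu) (hcv : t.closePos v = some cv) : cv < cu := by
  obtain ⟨ou, su, hou, hsu, rfl⟩ := exists_of_closePos_eq_some hcu
  obtain ⟨ov, sv, hov, hsv, rfl⟩ := exists_of_closePos_eq_some hcv
  have := openPos_lt_of_strictAnc huv hou hsu hov hsv
  omega

end RTree

section LowestMarkedAncestor

open RTree

variable {t : RTree} {Marked : List ℕ → Prop} {x : List ℕ} {ox y : ℕ}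

theorem exists_markedPos_le_of_strictAnc (hox : t.openPos x = some ox) {u : List ℕ}
    (hu : t.Valid u) (hmu : Marked u) (hux : StrictAnc u x) :
    ∃ y, MarkedPos t Marked y ∧ y ≤ ox := by
  obtain ⟨ou, cu, hou, hcu, -⟩ := hu.exists_openPos_closePos
  exact ⟨ou, ⟨u, hu, hmu, .inl hou⟩, ((prefix_iff_openPos_mem hou hcu hox).1 hux.1).1⟩

theorem lt_of_markedPos_of_lt (hmax : ∀ z, MarkedPos t Marked z → z ≤ ox → z ≤ y) {z : ℕ}
    (hz : MarkedPos t Marked z) (hyz : y < z) : ox < z :=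
  lt_of_not_ge fun h => (hmax z hz h).not_gt hyz

theorem lowest_markedAnc_of_openPos_eq (hxm : ¬ Marked x) (hox : t.openPos x = some ox)
    (hyx : y ≤ ox) (hmax : ∀ z, MarkedPos t Marked z → z ≤ ox → z ≤ y) {u : List ℕ}
    (hu : t.Valid u) (hmu : Marked u) (huy : t.openPos u = some y) :
    StrictAnc u x ∧ ∀ w, t.Valid w → Marked w → StrictAnc w x → w <+: u := by
  obtain ⟨cu, hcu, hyc⟩ := exists_closePos_of_openPos huy
  have hxc := lt_of_markedPos_of_lt hmax ⟨u, hu, hmu, .inr hcu⟩ hyc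
  refine ⟨⟨(prefix_iff_openPos_mem huy hcu hox).2 ⟨hyx, hxc.le⟩, fun h => hxm (h ▸ hmu)⟩,
    fun w hw hmw hwx => ?_⟩
  obtain ⟨ow, cw, how, hcw, -⟩ := hw.exists_openPos_closePos
  obtain ⟨howx, hxcw⟩ := (prefix_iff_openPos_mem how hcw hox).1 hwx.1
  exact (prefix_iff_openPos_mem how hcw huy).2
    ⟨hmax ow ⟨w, hw, hmw, .inl how⟩ howx, hyx.trans hxcw⟩

theorem markedAnc_eq_of_closePos_eq (hxm : ¬ Marked x) (hox : t.openPos x = some ox)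
    (hyx : y ≤ ox) (hmax : ∀ z, MarkedPos t Marked z → z ≤ ox → z ≤ y) {v : List ℕ}
    (hvy : t.closePos v = some y) :
    {u | t.Valid u ∧ Marked u ∧ StrictAnc u x} = {u | t.Valid u ∧ Marked u ∧ StrictAnc u v} := by
  obtain ⟨ov, hov, hovy⟩ := exists_openPos_of_closePos hvy
  have hyx : y < ox := lt_of_le_of_ne hyx fun h => closePos_ne_of_openPos_eq (h ▸ hox) hvy
  ext u
  refine ⟨fun ⟨hu, hmu, hux⟩ => ⟨hu, hmu, ?_⟩, fun ⟨hu, hmu, huv⟩ => ⟨hu, hmu, ?_⟩⟩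
  · obtain ⟨ou, cu, hou, hcu, -⟩ := hu.exists_openPos_closePos
    obtain ⟨houx, hxcu⟩ := (prefix_iff_openPos_mem hou hcu hox).1 hux.1
    have houy := hmax ou ⟨u, hu, hmu, .inl hou⟩ houx
    have hovu : ou < ov := lt_of_not_ge fun h => by
      have hvx := ((prefix_iff_openPos_mem hov hvy hou).2 ⟨h, houy⟩).trans hux.1
      have := ((prefix_iff_openPos_mem hov hvy hox).1 hvx).2
      omega
    refine ⟨(prefix_iff_openPos_mem hou hcu hov).2 ⟨hovu.le, by omega⟩, ?_⟩
    rintro rfl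
    exact absurd (Option.some_injective _ (hou.symm.trans hov)) hovu.ne
  · obtain ⟨ou, cu, hou, hcu, -⟩ := hu.exists_openPos_closePos
    have houv := ((prefix_iff_openPos_mem hou hcu hov).1 huv.1).1
    have hxc := lt_of_markedPos_of_lt hmax ⟨u, hu, hmu, .inr hcu⟩
      (closePos_lt_of_strictAnc huv hcu hvy)
    exact ⟨(prefix_iff_openPos_mem hou hcu hox).2 ⟨by omega, hxc.le⟩, fun h => hxm (h ▸ hmu)⟩

end LowestMarkedAncestor

theorem lowest_marked_ancestor_correct_general (t : RTree) (Marked : List ℕ → Prop)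
    (x : List ℕ) (hxm : ¬ Marked x)
    (ox : ℕ) (hox : t.openPos x = some ox) :
    ((¬ ∃ y : ℕ, MarkedPos t Marked y ∧ y ≤ ox) →
        ¬ ∃ u : List ℕ, t.Valid u ∧ Marked u ∧ StrictAnc u x) ∧
    ∀ y : ℕ, MarkedPos t Marked y → y ≤ ox →
      (∀ z : ℕ, MarkedPos t Marked z → z ≤ ox → z ≤ y) →
      ((∀ u : List ℕ, t.Valid u → Marked u → t.openPos u = some y →
          t.Valid u ∧ Marked u ∧ StrictAnc u x ∧
            ∀ w : List ℕ, t.Valid w → Marked w → StrictAnc w x → w <+: u) ∧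
       (∀ v : List ℕ, t.Valid v → Marked v → t.closePos v = some y →
          {u : List ℕ | t.Valid u ∧ Marked u ∧ StrictAnc u x} =
            {u : List ℕ | t.Valid u ∧ Marked u ∧ StrictAnc u v})) :=
  ⟨fun hnone ⟨_, hu, hmu, hux⟩ => hnone (exists_markedPos_le_of_strictAnc hox hu hmu hux),
    fun _ _ hyx hmax =>
      ⟨fun _ hu hmu huy => ⟨hu, hmu, lowest_markedAnc_of_openPos_eq hxm hox hyx hmax hu hmu huy⟩,
        fun _ _ _ hvy => markedAnc_eq_of_closePos_eq hxm hox hyx hmax hvy⟩⟩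

/-- Correctness of the marked-ancestor encoding.  Let `x` be an unmarked node with
opening parenthesis at position `ox`.
(i) If no marked parenthesis position lies at or before `ox`, then `x` has no
marked proper ancestor.
Otherwise let `y` be the rightmost marked parenthesis position `≤ ox`.
(ii) If `y` is the opening parenthesis of a marked node `u`, then `u` is the lowest
marked ancestor of `x`.
(iii) If `y` is the closing parenthesis of a marked node `v`, then the marked proper
ancestors of `x` are exactly the marked proper ancestors of `v` (so the lowest marked
ancestor of `x` is the marked node whose pair most tightly encloses `v`'s pair in the
restricted sequence, and `x` has no marked ancestor if no such enclosing pair exists). -/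
theorem lowest_marked_ancestor_correct (t : RTree) (Marked : List ℕ → Prop)
    (x : List ℕ) (hx : t.Valid x) (hxm : ¬ Marked x)
    (ox : ℕ) (hox : t.openPos x = some ox) :
    ((¬ ∃ y : ℕ, MarkedPos t Marked y ∧ y ≤ ox) →
        ¬ ∃ u : List ℕ, t.Valid u ∧ Marked u ∧ StrictAnc u x) ∧
    ∀ y : ℕ, MarkedPos t Marked y → y ≤ ox →
      (∀ z : ℕ, MarkedPos t Marked z → z ≤ ox → z ≤ y) →
      ((∀ u : List ℕ, t.Valid u → Marked u → t.openPos u = some y →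
          t.Valid u ∧ Marked u ∧ StrictAnc u x ∧
            ∀ w : List ℕ, t.Valid w → Marked w → StrictAnc w x → w <+: u) ∧
       (∀ v : List ℕ, t.Valid v → Marked v → t.closePos v = some y →
          {u : List ℕ | t.Valid u ∧ Marked u ∧ StrictAnc u x} =
            {u : List ℕ | t.Valid u ∧ Marked u ∧ StrictAnc u v})) :=
  lowest_marked_ancestor_correct_general t Marked x hxm ox hox
end

section
/- Monotonicity of string depth across suffix links: if w = xα is a right-branching substring of S, then for every right-branching prefix u of w with |u| ≥ 1, the tail of u (u with its first character removed) is a prefix of α; together with the preservation of right-branching under tail, the map u ↦ tail(u) is an injection from the non-root nodes on the path to w into the nodes on the path to α. -/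
/-- `w` is a right-branching substring of `S`. -/
def RightBranching (S w : List Char) : Prop :=
  ∃ a b : Char, a ≠ b ∧ (w ++ [a]) <:+: S ∧ (w ++ [b]) <:+: S

/-- If `x :: α` is a right-branching substring of `S`, then for every nonempty
right-branching prefix `u` of `x :: α`, the tail of `u` is a prefix of `α` and is
itself a node on the path to `α` (right-branching, or the root); moreover
`u ↦ u.tail` is injective on the non-root nodes on the path to `x :: α`, hence an
injection into the nodes on the path to `α`. -/
theorem suffix_link_depth_monotone (S : List Char) (x : Char) (α : List Char)
    (h : RightBranching S (x :: α)) :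
    (∀ u : List Char, u <+: (x :: α) → u ≠ [] → RightBranching S u →
      u.tail <+: α ∧ RightBranching S u.tail) ∧
    Set.InjOn List.tail {u : List Char | u <+: (x :: α) ∧ u ≠ [] ∧ RightBranching S u} := by
  constructor
  · rintro u hpre hne ⟨a, b, hab, ha, hb⟩
    obtain ⟨c, u, rfl⟩ := List.exists_cons_of_ne_nil hne
    obtain ⟨t, ht⟩ := hpre
    simp only [List.cons_append, List.cons.injEq] at ht
    refine ⟨⟨t, ht.2⟩, a, b, hab, ?_, ?_⟩
    · exact ((List.suffix_cons c (u ++ [a])).isInfix.trans ha)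
    · exact ((List.suffix_cons c (u ++ [b])).isInfix.trans hb)
  · rintro u1 ⟨h1, hn1, -⟩ u2 ⟨h2, hn2, -⟩ heq
    obtain ⟨c1, u1, rfl⟩ := List.exists_cons_of_ne_nil hn1
    obtain ⟨c2, u2, rfl⟩ := List.exists_cons_of_ne_nil hn2
    obtain ⟨t1, ht1⟩ := h1
    obtain ⟨t2, ht2⟩ := h2
    simp_all
end

section
/- If every pattern in dictionary D is marked in the generalized suffix tree and no pattern in D is a proper substring of another, then during the linear scan of the text maintaining the longest matching suffix, every pattern occurrence ends exactly at a position where the current locus itself is a marked node; i.e., lowest-marked-ancestor queries at suffix-link traversals are unnecessary. -/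
/-- If no pattern of the dictionary `D` is a proper substring of another, then during
the linear scan maintaining `L`, the longest suffix of `T[1..j]` that is a prefix of
some pattern, every pattern occurrence ending at position `j` is exactly `L` itself:
a pattern `P ∈ D` that is a suffix of `T[1..j]` equals `L` (so the locus itself is a
marked node and lowest-marked-ancestor queries are unnecessary). -/
theorem no_proper_substring_marked_locus (D : Set (List Char))
    (hsub : ∀ P ∈ D, ∀ Q ∈ D, P <:+: Q → P = Q)
    (T : List Char) (j : ℕ) (L : List Char)
    (hLsuf : L <:+ T.take j)
    (hLpre : ∃ P ∈ D, L <+: P)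
    (hLmax : ∀ w : List Char, w <:+ T.take j → (∃ P ∈ D, w <+: P) →
      w.length ≤ L.length) :
    ∀ P ∈ D, P <:+ T.take j → P = L := by
  intro P hP hPsuf
  obtain ⟨Q, hQ, hLQ⟩ := hLpre
  have hlen : P.length ≤ L.length := hLmax P hPsuf ⟨P, hP, List.prefix_rfl⟩
  -- P is a suffix of L
  have hPL : P <:+ L := List.suffix_of_suffix_length_le hPsuf hLsuf hlen
  -- P infix of Q
  have hPQ : P <:+: Q := hPL.isInfix.trans hLQ.isInfix
  have hPQ' : P = Q := hsub P hP Q hQ hPQ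
  subst hPQ'
  -- L <+: P and |P| ≤ |L| gives equality
  exact (hLQ.eq_of_length_le hlen).symm
end
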